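/- Let g be a Möbius transformation of the unit disk, g(z) = e^{iθ}·(z − a)/(1 − ā·z) with θ ∈ ℝ, a ∈ 𝔻. Let φ : S¹ → S¹ be continuous and let w₀ ∈ 𝔻 satisfy ξ_φ(w₀) = 0. Then ξ_{g∘φ}(g(w₀)) = 0; that is, the barycenter of a circle map is conformally natural under post-composition by Möbius transformations of the disk. -/

import Mathlib

/-!
A Möbius transformation `g` of the disk intertwines the maps `z ↦ (z - w)/(1 - w̄ z)` and
`z ↦ (z - g w)/(1 - conj (g w) z)` up to a unimodular factor depending only on `w`. So the
integrand defining `ξ_{g∘φ}(g w₀)` is a constant multiple of the one defining `ξ_φ(w₀)`.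
-/

/-- Arc-length distance on the unit circle: the infimum of `|x₁ − x₂|` over
representatives `ζ₁ = e^{ix₁}`, `ζ₂ = e^{ix₂}`. -/
noncomputable def dS1 (ζ₁ ζ₂ : ℂ) : ℝ :=
  sInf {d : ℝ | ∃ x₁ x₂ : ℝ, ζ₁ = Complex.exp (Complex.I * (x₁ : ℂ)) ∧
    ζ₂ = Complex.exp (Complex.I * (x₂ : ℂ)) ∧ d = |x₁ - x₂|}

/-- The average `ξ_φ(w) = (1/2π)·∫₀^{2π} (φ(e^{ix}) − w)/(1 − w̄·φ(e^{ix})) dx`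
of a circle map `φ` taken at `w` in the unit disk. -/
noncomputable def avgMap (φ : ℂ → ℂ) (w : ℂ) : ℂ :=
  (1 / (2 * Real.pi)) • ∫ x in (0 : ℝ)..(2 * Real.pi),
    (φ (Complex.exp (Complex.I * (x : ℂ))) - w) /
      (1 - (starRingEnd ℂ) w * φ (Complex.exp (Complex.I * (x : ℂ))))

open ComplexConjugate

noncomputable def diskMobius (E a z : ℂ) : ℂ :=
  E * (z - a) / (1 - conj a * z)

lemma one_sub_conj_mul_ne_zero {a z : ℂ} (ha : ‖a‖ < 1) (hz : ‖z‖ ≤ 1) :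
    1 - conj a * z ≠ 0 := by
  refine sub_ne_zero.2 fun h => ?_
  have : ‖conj a * z‖ < 1 := by
    rw [norm_mul, Complex.norm_conj]
    nlinarith [norm_nonneg a, norm_nonneg z]
  simp [← h] at this

lemma diskMobius_sub_div_one_sub_conj_mul {E a w z : ℂ} (hE : conj E * E = 1)
    (ha : 1 - conj a * a ≠ 0) (hw : 1 - conj a * w ≠ 0) (hz : 1 - conj a * z ≠ 0) :
    (diskMobius E a z - diskMobius E a w) /
        (1 - conj (diskMobius E a w) * diskMobius E a z) =
      E * (1 - a * conj w) / (1 - conj a * w) * ((z - w) / (1 - conj w * z)) := by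
  have hw' : 1 - a * conj w ≠ 0 := by
    simpa using (map_ne_zero (starRingEnd ℂ)).2 hw
  have hnum : diskMobius E a z - diskMobius E a w =
      E * (1 - conj a * a) * (z - w) / ((1 - conj a * z) * (1 - conj a * w)) := by
    rw [diskMobius, diskMobius, div_sub_div _ _ hz hw]
    ring
  have hden : 1 - conj (diskMobius E a w) * diskMobius E a z =
      (1 - conj a * a) * (1 - conj w * z) / ((1 - a * conj w) * (1 - conj a * z)) := by
    simp only [diskMobius, map_div₀, map_mul, map_sub, map_one, Complex.conj_conj]
    rw [div_mul_div_comm, one_sub_div (mul_ne_zero hw' hz)]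
    congr 1
    linear_combination (conj w * a - z * conj w + conj a * z - conj a * a) * hE
  rw [hnum, hden]
  -- when `1 - w̄ z = 0` both sides are junk divisions by zero
  rcases eq_or_ne (1 - conj w * z) 0 with hwz | hwz
  · simp [hwz]
  rw [div_div_div_eq, div_mul_div_comm, div_eq_div_iff (by simp [*]) (by simp [*])]
  ring

lemma avgMap_eq_mul_of_eqOn_circle {φ ψ : ℂ → ℂ} {w v c : ℂ}
    (h : ∀ ζ : ℂ, ‖ζ‖ = 1 →
      (ψ ζ - v) / (1 - conj v * ψ ζ) = c * ((φ ζ - w) / (1 - conj w * φ ζ))) :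
    avgMap ψ v = c * avgMap φ w := by
  simp only [avgMap, h _ (Complex.norm_exp_I_mul_ofReal _),
    intervalIntegral.integral_const_mul, mul_smul_comm]

theorem stmt_17_general (θ : ℝ) (a : ℂ) (ha : ‖a‖ < 1) (φ : ℂ → ℂ)
    (hmaps : ∀ ζ : ℂ, ‖ζ‖ = 1 → ‖φ ζ‖ = 1)
    (w₀ : ℂ) (hw₀ : ‖w₀‖ < 1) (hbar : avgMap φ w₀ = 0) :
    avgMap
      (fun ζ => Complex.exp (Complex.I * (θ : ℂ)) * (φ ζ - a) /
        (1 - (starRingEnd ℂ) a * φ ζ))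
      (Complex.exp (Complex.I * (θ : ℂ)) * (w₀ - a) /
        (1 - (starRingEnd ℂ) a * w₀)) = 0 := by
  have hE : conj (Complex.exp (Complex.I * θ)) * Complex.exp (Complex.I * θ) = 1 := by
    simp [Complex.conj_mul', Complex.norm_exp_I_mul_ofReal]
  have hmul := avgMap_eq_mul_of_eqOn_circle (φ := φ) (w := w₀)
    (ψ := fun ζ => diskMobius (Complex.exp (Complex.I * θ)) a (φ ζ))
    (v := diskMobius (Complex.exp (Complex.I * θ)) a w₀) fun ζ hζ =>
      diskMobius_sub_div_one_sub_conj_mul hE (one_sub_conj_mul_ne_zero ha ha.le)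
        (one_sub_conj_mul_ne_zero ha hw₀.le) (one_sub_conj_mul_ne_zero ha (hmaps ζ hζ).le)
  exact hmul.trans (by rw [hbar, mul_zero])

/-- Let `g(z) = e^{iθ}·(z − a)/(1 − ā·z)` be a Möbius transformation
of the unit disk (`θ ∈ ℝ`, `a ∈ 𝔻`).  If `φ : S¹ → S¹` is continuous and
`w₀ ∈ 𝔻` is a barycenter of `φ` (`ξ_φ(w₀) = 0`), then `g(w₀)` is a barycenter
of `g ∘ φ`: `ξ_{g∘φ}(g(w₀)) = 0`.  This is the conformal naturality of the
barycenter under post-composition. -/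
theorem stmt_17 (θ : ℝ) (a : ℂ) (ha : ‖a‖ < 1) (φ : ℂ → ℂ)
    (hcont : ContinuousOn φ {z : ℂ | ‖z‖ = 1})
    (hmaps : ∀ ζ : ℂ, ‖ζ‖ = 1 → ‖φ ζ‖ = 1)
    (w₀ : ℂ) (hw₀ : ‖w₀‖ < 1) (hbar : avgMap φ w₀ = 0) :
    avgMap
      (fun ζ => Complex.exp (Complex.I * (θ : ℂ)) * (φ ζ - a) /
        (1 - (starRingEnd ℂ) a * φ ζ))
      (Complex.exp (Complex.I * (θ : ℂ)) * (w₀ - a) /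
        (1 - (starRingEnd ℂ) a * w₀)) = 0 :=
  stmt_17_general θ a ha φ hmaps w₀ hw₀ hbar
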